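/- arXiv:1810.05546 — 3 statements merged into one kernel-verified Lean document; each statement's English description precedes it below -/
import Mathlib

section
/- Let Σ_prior, Σ_like be positive definite d×d matrices, A₁ = (Σ_prior⁻¹ + Σ_like⁻¹)⁻¹ Σ_prior⁻¹, and Σ_post = (Σ_prior⁻¹ + Σ_like⁻¹)⁻¹. Then choosing Σ₀ = Σ_prior + Σ_prior² Σ_like⁻¹ gives A₁ Σ₀ A₁ᵀ = Σ_post, provided Σ_prior and Σ_like commute (e.g. are symmetric and simultaneously diagonalizable). -/
open Matrix

/-!
Since `Σ_prior` commutes with `Σ_like⁻¹`, the anchor covariance factors as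
`Σ₀ = Σ_prior S Σ_prior` with `S = Σ_prior⁻¹ + Σ_like⁻¹` the posterior precision. With
`A₁ = S⁻¹ Σ_prior⁻¹` and all matrices symmetric, the outer factors `Σ_prior` cancel against
`Σ_prior⁻¹` in `A₁` and `A₁ᵀ`, leaving `S⁻¹ S S⁻¹ = S⁻¹ = Σ_post`.
-/

namespace Matrix

variable {n α : Type*} [Fintype n] [DecidableEq n] [CommRing α]

theorem commute_inv_right {A B : Matrix n n α} (h : Commute A B) : Commute A B⁻¹ := by
  simpa only [Matrix.zpow_neg_one] using Matrix.Commute.zpow_right h (-1)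

theorem inv_mul_mul_inv_self (A : Matrix n n α) : A⁻¹ * A * A⁻¹ = A⁻¹ := by
  by_cases hA : IsUnit A.det
  · rw [nonsing_inv_mul _ hA, Matrix.one_mul]
  · rw [nonsing_inv_apply_not_isUnit _ hA, Matrix.zero_mul, Matrix.zero_mul]

theorem add_sq_mul_inv_eq_mul_inv_add_inv_mul {P L : Matrix n n α} (hP : IsUnit P.det)
    (h : Commute P L) : P + P ^ 2 * L⁻¹ = P * (P⁻¹ + L⁻¹) * P := by
  rw [Matrix.mul_add, Matrix.add_mul, mul_nonsing_inv _ hP, Matrix.one_mul, Matrix.mul_assoc,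
    (commute_inv_right h).eq.symm, ← Matrix.mul_assoc, sq]

theorem inv_mul_inv_mul_mul_mul_transpose {P S : Matrix n n α} (hP : IsUnit P.det)
    (hPs : P.IsSymm) (hSs : S.IsSymm) :
    (S⁻¹ * P⁻¹) * (P * S * P) * (S⁻¹ * P⁻¹)ᵀ = S⁻¹ := by
  rw [transpose_mul, hPs.inv.eq, hSs.inv.eq]
  calc (S⁻¹ * P⁻¹) * (P * S * P) * (P⁻¹ * S⁻¹)
      = S⁻¹ * (P⁻¹ * P) * S * (P * P⁻¹) * S⁻¹ := by simp only [Matrix.mul_assoc]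
    _ = S⁻¹ := by
      rw [nonsing_inv_mul _ hP, mul_nonsing_inv _ hP, Matrix.mul_one, Matrix.mul_one,
        inv_mul_mul_inv_self]

end Matrix

theorem randomizedMAP_covariance_eq_posterior {n α : Type*} [Fintype n] [DecidableEq n]
    [CommRing α] {P L : Matrix n n α} (hP : IsUnit P.det)
    (hPs : P.IsSymm) (hLs : L.IsSymm) (h : Commute P L) :
    ((P⁻¹ + L⁻¹)⁻¹ * P⁻¹) * (P + P ^ 2 * L⁻¹) * ((P⁻¹ + L⁻¹)⁻¹ * P⁻¹)ᵀ = (P⁻¹ + L⁻¹)⁻¹ := by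
  rw [add_sq_mul_inv_eq_mul_inv_add_inv_mul hP h]
  exact inv_mul_inv_mul_mul_mul_transpose hP hPs (hPs.inv.add hLs.inv)

/-- Choosing the anchor noise covariance `Σ₀ = Σ_prior + Σ_prior² Σ_like⁻¹` gives
`A₁ Σ₀ A₁ᵀ = Σ_post` where `A₁ = (Σ_prior⁻¹ + Σ_like⁻¹)⁻¹ Σ_prior⁻¹` and
`Σ_post = (Σ_prior⁻¹ + Σ_like⁻¹)⁻¹`, provided `Σ_prior` and `Σ_like` commute. -/
theorem stmt_2 {d : ℕ} (Sprior Slike : Matrix (Fin d) (Fin d) ℝ)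
    (hprior : Sprior.PosDef) (hlike : Slike.PosDef)
    (hcomm : Sprior * Slike = Slike * Sprior) :
    ((Sprior⁻¹ + Slike⁻¹)⁻¹ * Sprior⁻¹) * (Sprior + Sprior ^ 2 * Slike⁻¹) *
        ((Sprior⁻¹ + Slike⁻¹)⁻¹ * Sprior⁻¹)ᵀ =
      (Sprior⁻¹ + Slike⁻¹)⁻¹ :=
  randomizedMAP_covariance_eq_posterior hprior.det_pos.ne'.isUnit
    (isHermitian_iff_isSymm.mp hprior.isHermitian) (isHermitian_iff_isSymm.mp hlike.isHermitian)
    hcomm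
end

section
/- Let Σ_prior, Σ_like be symmetric positive definite d×d matrices that commute. Define Σ_post = (Σ_prior⁻¹ + Σ_like⁻¹)⁻¹ and Σ_post^MAP = Σ_post² Σ_prior⁻¹. Then Σ_post^MAP = Σ_post (Σ_prior + Σ_like)⁻¹ Σ_like, and in particular Σ_post^MAP ⪯ Σ_post (i.e., Σ_post − Σ_post^MAP is positive semidefinite). -/
open Matrix

/-- For commuting symmetric positive definite `Σ_prior, Σ_like`, with
`Σ_post = (Σ_prior⁻¹ + Σ_like⁻¹)⁻¹` and `Σ_post^MAP = Σ_post² Σ_prior⁻¹`, we have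
`Σ_post^MAP = Σ_post (Σ_prior + Σ_like)⁻¹ Σ_like` and `Σ_post^MAP ⪯ Σ_post`. -/
theorem stmt_9 {d : ℕ} (Sprior Slike : Matrix (Fin d) (Fin d) ℝ)
    (hprior : Sprior.PosDef) (hlike : Slike.PosDef)
    (hsymp : Spriorᵀ = Sprior) (hsyml : Slikeᵀ = Slike)
    (hcomm : Sprior * Slike = Slike * Sprior) :
    (Sprior⁻¹ + Slike⁻¹)⁻¹ ^ 2 * Sprior⁻¹ =
        (Sprior⁻¹ + Slike⁻¹)⁻¹ * (Sprior + Slike)⁻¹ * Slike ∧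
      ((Sprior⁻¹ + Slike⁻¹)⁻¹ - (Sprior⁻¹ + Slike⁻¹)⁻¹ ^ 2 * Sprior⁻¹).PosSemidef := by
  set A := Sprior with hA
  set B := Slike with hB
  have hC : (A + B).PosDef := hprior.add hlike
  have hAu : IsUnit A.det := isUnit_iff_ne_zero.mpr hprior.det_pos.ne'
  have hBu : IsUnit B.det := isUnit_iff_ne_zero.mpr hlike.det_pos.ne'
  have hCu : IsUnit (A + B).det := isUnit_iff_ne_zero.mpr hC.det_pos.ne'
  set C := A + B with hCdef
  set Ci := C⁻¹ with hCi
  have hCiC : Ci * C = 1 := Matrix.nonsing_inv_mul C hCu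
  have hCCi : C * Ci = 1 := Matrix.mul_nonsing_inv C hCu
  have inv_comm : ∀ X : Matrix (Fin d) (Fin d) ℝ, X * C = C * X → X * Ci = Ci * X := by
    intro X h
    have l : Ci * (X * C) * Ci = Ci * X := by
      rw [mul_assoc, mul_assoc, hCCi, mul_one]
    have r : Ci * (C * X) * Ci = X * Ci := by
      rw [← mul_assoc, hCiC, one_mul]
    exact r.symm.trans ((by rw [h] : Ci * (C * X) * Ci = Ci * (X * C) * Ci).trans l)
  have cACi : A * Ci = Ci * A := by
    refine inv_comm A ?_
    rw [hCdef, mul_add, add_mul, hcomm]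
  have cBCi : B * Ci = Ci * B := by
    refine inv_comm B ?_
    rw [hCdef, mul_add, add_mul, hcomm]
  have swap : ∀ (X Y : Matrix (Fin d) (Fin d) ℝ), X * Y = Y * X →
      ∀ Z, X * (Y * Z) = Y * (X * Z) := by
    intro X Y h Z
    rw [← mul_assoc, h, mul_assoc]
  have hsum : A⁻¹ + B⁻¹ = A⁻¹ * C * B⁻¹ := by
    rw [hCdef, mul_add, Matrix.nonsing_inv_mul _ hAu, add_mul, one_mul, mul_assoc,
      Matrix.mul_nonsing_inv _ hBu, mul_one, add_comm]
  have hP : (A⁻¹ + B⁻¹)⁻¹ = B * Ci * A := by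
    rw [hsum, Matrix.mul_inv_rev, Matrix.mul_inv_rev,
      Matrix.nonsing_inv_nonsing_inv _ hAu, Matrix.nonsing_inv_nonsing_inv _ hBu,
      ← mul_assoc]
  set P := (A⁻¹ + B⁻¹)⁻¹ with hPdef
  have hPAi : P * A⁻¹ = B * Ci := by
    rw [hP, mul_assoc, Matrix.mul_nonsing_inv _ hAu, mul_one]
  have h1 : P ^ 2 * A⁻¹ = P * Ci * B := by
    rw [pow_two, mul_assoc, hPAi, cBCi, ← mul_assoc]
  refine ⟨h1, ?_⟩
  rw [h1]
  have hE : P - P * Ci * B = A * Ci * B * (Ci * A) := by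
    have hCB : C - B = A := by rw [hCdef]; exact add_sub_cancel_right A B
    calc P - P * Ci * B
        = P * Ci * C - P * Ci * B := by
          rw [mul_assoc P Ci C, hCiC, mul_one]
      _ = P * Ci * (C - B) := by rw [mul_sub]
      _ = P * Ci * A := by rw [hCB]
      _ = B * Ci * A * Ci * A := by rw [hP]
      _ = A * Ci * B * (Ci * A) := by
          simp only [mul_assoc,
            swap A Ci cACi, swap B Ci cBCi, swap B A hcomm.symm,
            cACi, cBCi, hcomm.symm]
  rw [hE]
  have hCt : Cᵀ = C := by rw [hCdef, transpose_add, hsymp, hsyml]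
  have hpsd := hlike.posSemidef.mul_mul_conjTranspose_same (A * Ci)
  have hct : (A * Ci)ᴴ = Ci * A := by
    rw [conjTranspose_eq_transpose_of_trivial, transpose_mul, hCi, transpose_nonsing_inv,
      hCt, hsymp]
  rwa [hct] at hpsd
end

section
/- For the anchored linear-regression MAP map θ* (θ₀) = (XᵀX + σ_ε²Σ_prior⁻¹)⁻¹(Xᵀy + σ_ε²Σ_prior⁻¹θ₀), if θ₀ ~ N(μ_prior, Σ_prior), then Var[θ*(θ₀)] = σ_ε⁴ M Σ_prior⁻¹ Mᵀ where M = (XᵀX + σ_ε²Σ_prior⁻¹)⁻¹, and this equals Σ_post² Σ_prior⁻¹ where Σ_post = σ_ε² M is the true posterior covariance (assuming all the matrices are symmetric). -/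
/-!
The map `θ ↦ f θ - f μ` is linear with matrix `A = σ² M Σ⁻¹`, so each entry of the centred
product is a product of two linear functionals `t ⬝ᵥ (θ₀ - μ)`. By the Gaussian hypothesis the
second moment of such a functional is `tᵀ Σ t`, and polarization turns this into the cross moment
`tᵀ Σ s`; hence the covariance is `A Σ Aᵀ = σ⁴ M Σ⁻¹ Mᵀ`. Symmetry of `M Σ⁻¹` gives
`Σ⁻¹ Mᵀ = M Σ⁻¹`, which turns this into `(σ² M)² Σ⁻¹`.
-/

open Matrix MeasureTheory ProbabilityTheory

/-- A random vector is Gaussian with mean `m` and covariance `S` iff every linear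
functional of it is a real Gaussian with the corresponding mean and variance. -/
def IsGaussianVec {Ω : Type*} [MeasureSpace Ω] {d : ℕ} (X : Ω → Fin d → ℝ)
    (m : Fin d → ℝ) (S : Matrix (Fin d) (Fin d) ℝ) : Prop :=
  ∀ t : Fin d → ℝ,
    Measure.map (fun ω => t ⬝ᵥ X ω) ℙ =
      gaussianReal (t ⬝ᵥ m) (t ⬝ᵥ S.mulVec t).toNNReal

lemma integral_sub_sq_of_map_eq_gaussianReal {Ω : Type*} [MeasurableSpace Ω] {P : Measure Ω}
    {Y : Ω → ℝ} {m : ℝ} {v : NNReal} (hY : P.map Y = gaussianReal m v) :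
    Integrable (fun ω => (Y ω - m) ^ 2) P ∧ ∫ ω, (Y ω - m) ^ 2 ∂P = v := by
  have hYm : AEMeasurable Y P :=
    .of_map_ne_zero (by rw [hY]; exact IsProbabilityMeasure.ne_zero _)
  have hg : Measurable (fun x : ℝ => (x - m) ^ 2) := by fun_prop
  have hint : Integrable (fun x : ℝ => (x - m) ^ 2) (gaussianReal m v) :=
    ((memLp_id_gaussianReal 2).sub (memLp_const m)).integrable_sq
  constructor
  · rw [← hY] at hint
    exact (integrable_map_measure hg.aestronglyMeasurable hYm).mp hint
  · rw [← integral_map hYm hg.aestronglyMeasurable, hY]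
    simpa only [id_eq, integral_id_gaussianReal, variance_id_gaussianReal] using
      (variance_eq_integral (X := id) (μ := gaussianReal m v) aemeasurable_id).symm

lemma IsGaussianVec.integral_dotProduct_sub_mul {Ω : Type*} [MeasureSpace Ω] {d : ℕ}
    {θ : Ω → Fin d → ℝ} {μ : Fin d → ℝ} {S : Matrix (Fin d) (Fin d) ℝ}
    (hθ : IsGaussianVec θ μ S) (hS : S.PosSemidef) (t s : Fin d → ℝ) :
    ∫ ω, (t ⬝ᵥ θ ω - t ⬝ᵥ μ) * (s ⬝ᵥ θ ω - s ⬝ᵥ μ) = t ⬝ᵥ S *ᵥ s := by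
  have moment (u : Fin d → ℝ) :
      Integrable (fun ω => (u ⬝ᵥ θ ω - u ⬝ᵥ μ) ^ 2) ∧
        ∫ ω, (u ⬝ᵥ θ ω - u ⬝ᵥ μ) ^ 2 = u ⬝ᵥ S *ᵥ u := by
    obtain ⟨hint, hvar⟩ := integral_sub_sq_of_map_eq_gaussianReal (hθ u)
    exact ⟨hint, hvar.trans (Real.coe_toNNReal _ (hS.dotProduct_mulVec_nonneg u))⟩
  obtain ⟨hit, hvt⟩ := moment t
  obtain ⟨his, hvs⟩ := moment s
  obtain ⟨hits, hvts⟩ := moment (t + s)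
  have polarize : (fun ω => (t ⬝ᵥ θ ω - t ⬝ᵥ μ) * (s ⬝ᵥ θ ω - s ⬝ᵥ μ)) = fun ω =>
      (((t + s) ⬝ᵥ θ ω - (t + s) ⬝ᵥ μ) ^ 2 - (t ⬝ᵥ θ ω - t ⬝ᵥ μ) ^ 2
        - (s ⬝ᵥ θ ω - s ⬝ᵥ μ) ^ 2) / 2 := by
    funext ω
    simp only [add_dotProduct]
    ring
  have hcomm : s ⬝ᵥ S *ᵥ t = t ⬝ᵥ S *ᵥ s := by
    rw [dotProduct_mulVec, ← mulVec_transpose, (isHermitian_iff_isSymm.mp hS.isHermitian).eq,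
      dotProduct_comm]
  rw [polarize, integral_div, integral_sub (hits.sub' hit) his, integral_sub hits hit, hvt, hvs,
    hvts, add_dotProduct, mulVec_add, dotProduct_add, dotProduct_add, hcomm]
  ring

lemma IsGaussianVec.integral_mulVec_sub_mul {Ω : Type*} [MeasureSpace Ω] {n d : ℕ}
    {θ : Ω → Fin d → ℝ} {μ : Fin d → ℝ} {S : Matrix (Fin d) (Fin d) ℝ}
    (hθ : IsGaussianVec θ μ S) (hS : S.PosSemidef) (A : Matrix (Fin n) (Fin d) ℝ) (i j : Fin n) :
    ∫ ω, (A *ᵥ (θ ω - μ)) i * (A *ᵥ (θ ω - μ)) j = (A * S * Aᵀ) i j := by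
  have hentry : (A * S * Aᵀ) i j = A i ⬝ᵥ S *ᵥ A j := by
    rw [Matrix.mul_assoc]
    simp only [mul_apply, transpose_apply, dotProduct, mulVec]
  simp only [mulVec, dotProduct_sub, hentry]
  exact hθ.integral_dotProduct_sub_mul hS (A i) (A j)

theorem stmt_13_general {Ω : Type*} [MeasureSpace Ω]
    {N d : ℕ} (X : Matrix (Fin N) (Fin d) ℝ) (y : Fin N → ℝ)
    (se2 : ℝ) (Sprior : Matrix (Fin d) (Fin d) ℝ)
    (hprior : Sprior.PosDef) (μprior : Fin d → ℝ)
    (θ₀ : Ω → Fin d → ℝ)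
    (hGauss : IsGaussianVec θ₀ μprior Sprior)
    (M : Matrix (Fin d) (Fin d) ℝ)
    (f : (Fin d → ℝ) → Fin d → ℝ)
    (hf : ∀ θ, f θ = M.mulVec (Xᵀ.mulVec y + se2 • Sprior⁻¹.mulVec θ))
    (hsymm : (M * Sprior⁻¹)ᵀ = M * Sprior⁻¹) :
    (∀ i j, (∫ ω, (f (θ₀ ω) i - f μprior i) * (f (θ₀ ω) j - f μprior j)) =
        (se2 ^ 2 • (M * Sprior⁻¹ * Mᵀ)) i j) ∧
      se2 ^ 2 • (M * Sprior⁻¹ * Mᵀ) = (se2 • M) ^ 2 * Sprior⁻¹ := by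
  set A := se2 • (M * Sprior⁻¹)
  have hf_sub (θ : Fin d → ℝ) : f θ - f μprior = A *ᵥ (θ - μprior) := by
    rw [hf, hf, ← mulVec_sub, add_sub_add_left_eq_sub, ← smul_sub, ← mulVec_sub, mulVec_smul,
      mulVec_mulVec, smul_mulVec]
  have hSinv_symm : (Sprior⁻¹)ᵀ = Sprior⁻¹ :=
    (isHermitian_iff_isSymm.mp hprior.inv.isHermitian).eq
  have hcov : A * Sprior * Aᵀ = se2 ^ 2 • (M * Sprior⁻¹ * Mᵀ) := by
    rw [transpose_smul, transpose_mul, hSinv_symm, Matrix.smul_mul, Matrix.smul_mul,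
      Matrix.mul_smul, smul_smul, ← sq, Matrix.mul_assoc M,
      nonsing_inv_mul _ hprior.det_pos.ne'.isUnit, Matrix.mul_one, Matrix.mul_assoc]
  refine ⟨fun i j => ?_, ?_⟩
  · rw [← hcov, ← hGauss.integral_mulVec_sub_mul hprior.posSemidef A i j]
    simp only [← hf_sub, Pi.sub_apply]
  · have hcomm : Sprior⁻¹ * Mᵀ = M * Sprior⁻¹ := by rw [← hsymm, transpose_mul, hSinv_symm]
    rw [Matrix.mul_assoc, hcomm, smul_pow, sq M, Matrix.smul_mul, Matrix.mul_assoc]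

/-- For the anchored linear-regression MAP map
`θ*(θ₀) = (XᵀX + σ_ε²Σ_prior⁻¹)⁻¹(Xᵀy + σ_ε²Σ_prior⁻¹θ₀)` with
`θ₀ ~ N(μ_prior, Σ_prior)`, the covariance of `θ*(θ₀)` is
`σ_ε⁴ M Σ_prior⁻¹ Mᵀ` with `M = (XᵀX + σ_ε²Σ_prior⁻¹)⁻¹`, which equals
`Σ_post² Σ_prior⁻¹` for `Σ_post = σ_ε² M` (assuming the matrices are symmetric). -/
theorem stmt_13 {Ω : Type*} [MeasureSpace Ω] [IsProbabilityMeasure (ℙ : Measure Ω)]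
    {N d : ℕ} (X : Matrix (Fin N) (Fin d) ℝ) (y : Fin N → ℝ)
    (se2 : ℝ) (hse2 : 0 < se2) (Sprior : Matrix (Fin d) (Fin d) ℝ)
    (hprior : Sprior.PosDef) (μprior : Fin d → ℝ)
    (θ₀ : Ω → Fin d → ℝ) (hmeas : Measurable θ₀)
    (hGauss : IsGaussianVec θ₀ μprior Sprior)
    (M : Matrix (Fin d) (Fin d) ℝ) (hM : M = (Xᵀ * X + se2 • Sprior⁻¹)⁻¹)
    (f : (Fin d → ℝ) → Fin d → ℝ)
    (hf : ∀ θ, f θ = M.mulVec (Xᵀ.mulVec y + se2 • Sprior⁻¹.mulVec θ))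
    (hsymm : (M * Sprior⁻¹)ᵀ = M * Sprior⁻¹) :
    (∀ i j, (∫ ω, (f (θ₀ ω) i - f μprior i) * (f (θ₀ ω) j - f μprior j)) =
        (se2 ^ 2 • (M * Sprior⁻¹ * Mᵀ)) i j) ∧
      se2 ^ 2 • (M * Sprior⁻¹ * Mᵀ) = (se2 • M) ^ 2 * Sprior⁻¹ :=
  stmt_13_general X y se2 Sprior hprior μprior θ₀ hGauss M f hf hsymm
end
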